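/- Let u = e_1 + e_n and v = e_0 + e_1 + e_n in C^{n+2} (p, q ≥ 1). For Z = (z_1, ..., z_n) with z_k = a_k + i b_k, the matrix s_{Z,z} maps the line <u> to the line <v> and the line <v> to the line <u> if and only if a_1 + a_n + 1 = 0 and b_1 + b_n = 0 (with a_k, b_k for 2 ≤ k ≤ n-1 and z ∈ R arbitrary). In particular, for every real z there exists such a non-involutive (z ≠ 0) symmetry swapping <u> and <v>, and no s_{Z,z} preserves both lines. -/

import Mathlib

open Complex Matrix ComplexConjugate

noncomputable section

/-- signature entries of the diagonal matrix `I = diag(1^p, (-1)^q)`. -/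
def sgnCR (p k : ℕ) : ℂ := if k < p then 1 else -1

/-- safe indexing of a vector `Z : Fin n → ℂ` by a natural number. -/
def vx {n : ℕ} (Z : Fin n → ℂ) (k : ℕ) : ℂ := if h : k < n then Z ⟨k, h⟩ else 0

/-- the pseudo-Hermitian form `m` of signature `(p+1, q+1)` on `ℂ^{n+2}`. -/
def mForm (n p : ℕ) (u v : Fin (n + 2) → ℂ) : ℂ :=
  u ⟨0, by omega⟩ * conj (v ⟨n + 1, by omega⟩) + u ⟨n + 1, by omega⟩ * conj (v ⟨0, by omega⟩)
    + ∑ k : Fin n, sgnCR p k.val * (u ⟨k.val + 1, by omega⟩ * conj (v ⟨k.val + 1, by omega⟩))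

/-- the matrix `s_{Z,z}` with rows `(-1, -Z, iz + ½ Z I Z^*)`, `(0, E, -I Z^*)`, `(0, 0, -1)`. -/
def sMat (n p : ℕ) (Z : Fin n → ℂ) (z : ℝ) : Matrix (Fin (n + 2)) (Fin (n + 2)) ℂ :=
  Matrix.of fun i j =>
    if i.val = 0 then
      if j.val = 0 then -1
      else if j.val = n + 1 then
        Complex.I * z + (1 / 2) * ∑ k : Fin n, Z k * sgnCR p k.val * conj (Z k)
      else -vx Z (j.val - 1)
    else if i.val = n + 1 then
      if j.val = n + 1 then -1 else 0
    else
      if j.val = 0 then 0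
      else if j.val = n + 1 then -(sgnCR p (i.val - 1) * conj (vx Z (i.val - 1)))
      else if i = j then 1 else 0

/-! The matrix `s_{Z,z}` sends `e₀` to `-e₀` and each `e_k` (`1 ≤ k ≤ n`) to `e_k - z_k e₀`.
Hence, with `σ = z₁ + z_n`, we get `s u = u - σ e₀` and `s v = u - (1 + σ) e₀`. Since `e₀` and `u`
are linearly independent, `s u ∈ ℂ v` and `s v ∈ ℂ u` each say exactly `σ = -1`, whereas
`s u ∈ ℂ u` and `s v ∈ ℂ v` would force both `σ = 0` and `σ = -2`. -/

section LinearAlgebra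

variable {K V : Type*} [Field K] [AddCommGroup V] [Module K V] {e w : V}

theorem LinearIndependent.exists_smul_add_eq_smul_add_iff (h : LinearIndependent K ![e, w])
    (a b : K) : (∃ c : K, a • e + b • w = c • (e + w)) ↔ a = b := by
  constructor
  · rintro ⟨c, hc⟩
    obtain ⟨hac, hbc⟩ := h.eq_of_pair (hc.trans (smul_add c e w))
    exact hac.trans hbc.symm
  · rintro rfl
    exact ⟨a, (smul_add a e w).symm⟩

theorem LinearIndependent.exists_smul_add_eq_smul_right_iff (h : LinearIndependent K ![e, w])
    (a b : K) : (∃ c : K, a • e + b • w = c • w) ↔ a = 0 := by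
  constructor
  · rintro ⟨c, hc⟩
    exact (h.eq_of_pair (t := b) (s' := 0) (t' := c) (by rwa [zero_smul, zero_add])).1
  · rintro rfl
    exact ⟨b, by rw [zero_smul, zero_add]⟩

end LinearAlgebra

section Columns

variable {n : ℕ} (p : ℕ) (Z : Fin n → ℂ) (z : ℝ)

theorem sMat_mulVec_single_zero :
    sMat n p Z z *ᵥ Pi.single 0 1 = -Pi.single 0 1 := by
  rw [mulVec_single_one]
  funext i
  by_cases hi : i = 0
  · subst hi; simp [sMat]
  · simp [sMat, hi]

theorem sMat_mulVec_single_of_ne (k : Fin (n + 2)) (hk0 : k.val ≠ 0) (hkn : k.val ≠ n + 1) :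
    sMat n p Z z *ᵥ Pi.single k 1 = Pi.single k 1 - vx Z (k.val - 1) • Pi.single 0 1 := by
  rw [mulVec_single_one]
  funext i
  simp only [col_apply, sMat, of_apply, Pi.sub_apply, Pi.smul_apply, Pi.single_apply, smul_eq_mul,
    hk0, hkn, if_false, Fin.ext_iff, Fin.val_zero]
  split_ifs <;> simp_all

end Columns

def uVec (n : ℕ) : Fin (n + 2) → ℂ := fun j => if j.val = 1 ∨ j.val = n then 1 else 0

def vVec (n : ℕ) : Fin (n + 2) → ℂ := fun j => if j.val = 0 ∨ j.val = 1 ∨ j.val = n then 1 else 0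

section Lines

variable {n : ℕ} (hn : 2 ≤ n)
include hn

theorem uVec_eq_single_add_single :
    uVec n = Pi.single ⟨1, by omega⟩ 1 + Pi.single ⟨n, by omega⟩ 1 := by
  funext j
  simp only [uVec, Pi.add_apply, Pi.single_apply, Fin.ext_iff]
  split_ifs <;> simp_all

theorem vVec_eq_single_zero_add_uVec : vVec n = Pi.single 0 1 + uVec n := by
  funext j
  simp only [vVec, uVec, Pi.add_apply, Pi.single_apply, Fin.ext_iff, Fin.val_zero]
  split_ifs <;> simp_all
  omega

theorem linearIndependent_single_zero_uVec :
    LinearIndependent ℂ ![(Pi.single 0 1 : Fin (n + 2) → ℂ), uVec n] := by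
  rw [LinearIndependent.pair_iff]
  intro s t hst
  have h0 := congrFun hst 0
  have h1 := congrFun hst ⟨1, by omega⟩
  simp [uVec] at h0 h1
  subst h1
  simpa using h0

theorem sMat_mulVec_uVec (p : ℕ) (Z : Fin n → ℂ) (z : ℝ) :
    sMat n p Z z *ᵥ uVec n = (-(vx Z 0 + vx Z (n - 1))) • Pi.single 0 1 + (1 : ℂ) • uVec n := by
  rw [uVec_eq_single_add_single hn, mulVec_add,
    sMat_mulVec_single_of_ne p Z z _ one_ne_zero (by simp only; omega),
    sMat_mulVec_single_of_ne p Z z _ (by simp only; omega) (by simp only; omega)]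
  module

theorem sMat_mulVec_vVec (p : ℕ) (Z : Fin n → ℂ) (z : ℝ) :
    sMat n p Z z *ᵥ vVec n
      = (-(1 + (vx Z 0 + vx Z (n - 1)))) • Pi.single 0 1 + (1 : ℂ) • uVec n := by
  rw [vVec_eq_single_zero_add_uVec hn, mulVec_add, sMat_mulVec_single_zero,
    sMat_mulVec_uVec hn]
  module

theorem sMat_swaps_iff (p : ℕ) (Z : Fin n → ℂ) (z : ℝ) :
    ((∃ c : ℂ, sMat n p Z z *ᵥ uVec n = c • vVec n) ∧
      (∃ d : ℂ, sMat n p Z z *ᵥ vVec n = d • uVec n)) ↔ vx Z 0 + vx Z (n - 1) = -1 := by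
  have hli := linearIndependent_single_zero_uVec hn
  rw [sMat_mulVec_uVec hn, sMat_mulVec_vVec hn, vVec_eq_single_zero_add_uVec hn,
    hli.exists_smul_add_eq_smul_add_iff, hli.exists_smul_add_eq_smul_right_iff]
  constructor
  · rintro ⟨h, -⟩
    linear_combination -h
  · intro h
    constructor <;> linear_combination -h

theorem sMat_not_preserves (p : ℕ) (Z : Fin n → ℂ) (z : ℝ) :
    ¬((∃ c : ℂ, sMat n p Z z *ᵥ uVec n = c • uVec n) ∧
      (∃ d : ℂ, sMat n p Z z *ᵥ vVec n = d • vVec n)) := by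
  have hli := linearIndependent_single_zero_uVec hn
  rw [sMat_mulVec_uVec hn, sMat_mulVec_vVec hn, vVec_eq_single_zero_add_uVec hn,
    hli.exists_smul_add_eq_smul_add_iff, hli.exists_smul_add_eq_smul_right_iff]
  rintro ⟨hu, hv⟩
  have : (2 : ℂ) = 0 := by linear_combination hu - hv
  norm_num at this

end Lines

theorem example_case3_general (n p : ℕ) (hn : 2 ≤ n) :
    let u : Fin (n + 2) → ℂ := fun j => if j.val = 1 ∨ j.val = n then 1 else 0
    let v : Fin (n + 2) → ℂ := fun j => if j.val = 0 ∨ j.val = 1 ∨ j.val = n then 1 else 0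
    (∀ (Z : Fin n → ℂ) (z : ℝ),
      ((∃ c : ℂ, (sMat n p Z z).mulVec u = c • v) ∧
       (∃ d : ℂ, (sMat n p Z z).mulVec v = d • u)) ↔
      ((vx Z 0).re + (vx Z (n - 1)).re + 1 = 0 ∧ (vx Z 0).im + (vx Z (n - 1)).im = 0)) ∧
    (∀ z : ℝ, ∃ Z : Fin n → ℂ,
      (∃ c : ℂ, (sMat n p Z z).mulVec u = c • v) ∧
      (∃ d : ℂ, (sMat n p Z z).mulVec v = d • u)) ∧
    (∀ (Z : Fin n → ℂ) (z : ℝ),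
      ¬((∃ c : ℂ, (sMat n p Z z).mulVec u = c • u) ∧
        (∃ d : ℂ, (sMat n p Z z).mulVec v = d • v))) := by
  intro u v
  refine ⟨fun Z z => (sMat_swaps_iff hn p Z z).trans ?_,
    fun z => ⟨Pi.single ⟨0, by omega⟩ (-1), (sMat_swaps_iff hn p _ z).mpr ?_⟩,
    sMat_not_preserves hn p⟩
  · rw [Complex.ext_iff, add_re, add_im, neg_re, neg_im, one_re, one_im,
      ← eq_neg_iff_add_eq_zero, neg_zero]
  · simp [vx, Fin.ext_iff, show n ≠ 0 by omega, show n - 1 ≠ 0 by omega]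

/-- for `u = e₁ + e_n` and `v = e₀ + e₁ + e_n`, the symmetry `s_{Z,z}` swaps
the lines `⟨u⟩` and `⟨v⟩` if and only if `a₁ + a_n + 1 = 0` and `b₁ + b_n = 0` (writing
`z_k = a_k + i b_k` for the entries of `Z`, with the other entries and `z` arbitrary).
In particular for every real `z` there is such a symmetry (so also non-involutive ones
with `z ≠ 0`), and no `s_{Z,z}` preserves both lines. -/
theorem example_case3 (n p : ℕ) (hn : 2 ≤ n) (hp : 1 ≤ p) (hq : p + 1 ≤ n) :
    let u : Fin (n + 2) → ℂ := fun j => if j.val = 1 ∨ j.val = n then 1 else 0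
    let v : Fin (n + 2) → ℂ := fun j => if j.val = 0 ∨ j.val = 1 ∨ j.val = n then 1 else 0
    (∀ (Z : Fin n → ℂ) (z : ℝ),
      ((∃ c : ℂ, (sMat n p Z z).mulVec u = c • v) ∧
       (∃ d : ℂ, (sMat n p Z z).mulVec v = d • u)) ↔
      ((vx Z 0).re + (vx Z (n - 1)).re + 1 = 0 ∧ (vx Z 0).im + (vx Z (n - 1)).im = 0)) ∧
    (∀ z : ℝ, ∃ Z : Fin n → ℂ,
      (∃ c : ℂ, (sMat n p Z z).mulVec u = c • v) ∧
      (∃ d : ℂ, (sMat n p Z z).mulVec v = d • u)) ∧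
    (∀ (Z : Fin n → ℂ) (z : ℝ),
      ¬((∃ c : ℂ, (sMat n p Z z).mulVec u = c • u) ∧
        (∃ d : ℂ, (sMat n p Z z).mulVec v = d • v))) :=
  example_case3_general n p hn
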